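/- For multisets S, S', T, T' in S_Φ(X, x_0), one has d_Φ(S + S', T + T') ≤ d_Φ(S, T) + d_Φ(S', T'), where + denotes multiset sum (addition of multiplicities away from the basepoint). -/

import Mathlib

open Filter

/-- A symmetric norm: a norm on the space `c_00` of finitely supported real
sequences (modelled as `ℕ →₀ ℝ`), normalised by `Φ(1,0,0,…) = 1`, and invariant
under permutations of the entries and under replacing entries by their absolute
values. -/
structure SymmetricNorm where
  toFun : (ℕ →₀ ℝ) → ℝ
  nonneg : ∀ ξ, 0 ≤ toFun ξ
  eq_zero : ∀ ξ, toFun ξ = 0 → ξ = 0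
  add_le : ∀ ξ η, toFun (ξ + η) ≤ toFun ξ + toFun η
  smul_eq : ∀ (c : ℝ) (ξ), toFun (c • ξ) = |c| * toFun ξ
  norm_single : toFun (Finsupp.single 0 1) = 1
  perm_invariant : ∀ (π : Equiv.Perm ℕ) (ξ), toFun (Finsupp.equivMapDomain π ξ) = toFun ξ
  abs_invariant : ∀ (ξ : ℕ →₀ ℝ), toFun (Finsupp.mapRange (fun a => |a|) abs_zero ξ) = toFun ξ

/-- The truncation `(ξ_0, …, ξ_{n-1}, 0, 0, …)` of a sequence, as an element of `c_00`. -/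
noncomputable def truncF (ξ : ℕ → ℝ) (n : ℕ) : ℕ →₀ ℝ :=
  ∑ i ∈ Finset.range n, Finsupp.single i (ξ i)

/-- The extension of a symmetric norm to sequences: `Φ(ξ) = lim_n Φ(ξ_0,…,ξ_{n-1},0,0,…)`. -/
noncomputable def SymmetricNorm.ext (Φ : SymmetricNorm) (ξ : ℕ → ℝ) : ℝ :=
  limUnder atTop fun n => Φ.toFun (truncF ξ n)

/-- Membership in the natural domain `ℓ_Φ`: the sequence tends to `0` and the
`Φ`-norms of its truncations converge. -/
def MemLPhi (Φ : SymmetricNorm) (ξ : ℕ → ℝ) : Prop :=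
  Tendsto ξ atTop (nhds 0) ∧ ∃ L, Tendsto (fun n => Φ.toFun (truncF ξ n)) atTop (nhds L)

/-- Membership in `ℓ_Φ^+`: nonnegative `Φ`-summable sequences. -/
def MemLPhiPlus (Φ : SymmetricNorm) (ξ : ℕ → ℝ) : Prop :=
  (∀ i, 0 ≤ ξ i) ∧ MemLPhi Φ ξ

/-- A symmetric norm is regular if `Φ(ξ_{n+1}, ξ_{n+2}, …) → 0` for every `ξ ∈ ℓ_Φ`. -/
def SymmetricNorm.Regular (Φ : SymmetricNorm) : Prop :=
  ∀ ξ : ℕ → ℝ, MemLPhi Φ ξ →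
    Tendsto (fun n => Φ.ext fun i => ξ (n + i)) atTop (nhds 0)

/-- `partialMax ξ k` is the supremum of sums of `k` distinct entries of `ξ`;
for nonnegative `ξ ∈ c_0` this equals `ξ^↓_1 + ⋯ + ξ^↓_k`. -/
noncomputable def partialMax (ξ : ℕ → ℝ) (k : ℕ) : ℝ :=
  sSup ((fun s : Finset ℕ => ∑ i ∈ s, ξ i) '' {s | s.card = k})

/-- The nonincreasing rearrangement `ξ^↓` of a (nonnegative, null) sequence,
defined via `ξ^↓_1 = max ξ_i`, `ξ^↓_1 + ξ^↓_2 = max_{i ≠ j} (ξ_i + ξ_j)`, …. -/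
noncomputable def decRearr (ξ : ℕ → ℝ) (k : ℕ) : ℝ :=
  partialMax ξ (k + 1) - partialMax ξ k
open scoped Classical

variable {X : Type*} [MetricSpace X]

/-- `s : ℕ → X` is an enumeration of the countable multiset `S` in `(X, x₀)`:
every point other than the basepoint occurs in `s` exactly according to its
multiplicity in `S`. -/
def IsEnum (x0 : X) (S : X → ℕ∞) (s : ℕ → X) : Prop :=
  ∀ x, x ≠ x0 → S x = {i : ℕ | s i = x}.encard

/-- A countable multiset in `(X, x₀)`: a multiplicity function in which the
basepoint is the only point of infinite multiplicity and whose support is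
countable. -/
def IsCMultiset (x0 : X) (S : X → ℕ∞) : Prop :=
  S x0 = ⊤ ∧ (∀ x, x ≠ x0 → S x ≠ ⊤) ∧ {x | S x ≠ 0}.Countable

/-- Membership in `S_Φ(X, x₀)`: a countable multiset whose points `s_i` satisfy
`(d(x₀, s_i))_i ∈ ℓ_Φ`. -/
def MemSPhi (Φ : SymmetricNorm) (x0 : X) (S : X → ℕ∞) : Prop :=
  IsCMultiset x0 S ∧ ∃ s : ℕ → X, IsEnum x0 S s ∧ MemLPhi Φ fun i => dist x0 (s i)

/-- The distance `d_Φ(S, T)`: the infimum over pairs of enumerations `(s_i), (t_i)`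
of `S, T` of `Φ(d(s_1,t_1), d(s_2,t_2), …)`. -/
noncomputable def dPhi (Φ : SymmetricNorm) (x0 : X) (S T : X → ℕ∞) : ℝ :=
  sInf {r | ∃ s t : ℕ → X, IsEnum x0 S s ∧ IsEnum x0 T t ∧
    MemLPhi Φ (fun i => dist (s i) (t i)) ∧ r = Φ.ext fun i => dist (s i) (t i)}

/-- The sum of two multisets (addition of multiplicities away from the basepoint). -/
noncomputable def msum (x0 : X) (S T : X → ℕ∞) : X → ℕ∞ := fun x => if x = x0 then ⊤ else S x + T x

/-- The difference of two multisets (subtraction of multiplicities away from the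
basepoint). -/
noncomputable def mdiff (x0 : X) (S T : X → ℕ∞) : X → ℕ∞ := fun x => if x = x0 then ⊤ else S x - T x

/-- The intersection of a multiset with a subset `V ⊆ X`. -/
noncomputable def minter (x0 : X) (S : X → ℕ∞) (V : Set X) : X → ℕ∞ :=
  fun x => if x = x0 then ⊤ else if x ∈ V then S x else 0

/-- The multiset `S` has rank `n`: its total multiplicity away from the basepoint
is `n`, i.e. its non-basepoint part can be listed by a tuple of length `n`. -/
def HasRank (x0 : X) (S : X → ℕ∞) (n : ℕ) : Prop :=
  ∃ f : Fin n → X, (∀ i, f i ≠ x0) ∧ ∀ x, x ≠ x0 → S x = {i : Fin n | f i = x}.encard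

/-! Interleaving near-optimal pairs of enumerations `(s, t)` of `(S, T)` and `(s', t')` of
`(S', T')` gives enumerations of `S + S'` and `T + T'` whose distance sequence interleaves those
of the two pairs. Its truncation to length `2n` is the sum of the truncations to length `n` of the
two distance sequences, moved to the even and to the odd indices; by permutation invariance and
the triangle inequality for `Φ` its norm is at most the sum of their norms. Since `Φ` is monotone
in the absolute values of the entries (each entry can be shrunk by a convex combination with a
sign flip), the truncated norms increase with the length, so the bound passes to the limit. -/

theorem truncF_apply (ξ : ℕ → ℝ) (n i : ℕ) : truncF ξ n i = if i < n then ξ i else 0 := by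
  simp [truncF, Finsupp.finsetSum_apply, Finsupp.single_apply]

theorem truncF_succ (ξ : ℕ → ℝ) (n : ℕ) :
    truncF ξ (n + 1) = truncF ξ n + Finsupp.single n (ξ n) :=
  Finset.sum_range_succ _ n

theorem truncF_add (ξ η : ℕ → ℝ) (n : ℕ) : truncF (ξ + η) n = truncF ξ n + truncF η n := by
  simp [truncF, Finset.sum_add_distrib]

namespace SymmetricNorm

variable (Φ : SymmetricNorm)

theorem toFun_neg_update (ζ : ℕ →₀ ℝ) (a : ℕ) :
    Φ.toFun (ζ.update a (-ζ a)) = Φ.toFun ζ := by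
  rw [← Φ.abs_invariant, ← Φ.abs_invariant ζ]
  congr 1
  ext i
  rcases eq_or_ne i a with rfl | hia <;> simp [Function.update_of_ne, *]

theorem toFun_update_mul_le (ζ : ℕ →₀ ℝ) (a : ℕ) {t : ℝ} (ht : |t| ≤ 1) :
    Φ.toFun (ζ.update a (t * ζ a)) ≤ Φ.toFun ζ := by
  obtain ⟨ht₁, ht₂⟩ := abs_le.1 ht
  have hconvex : ζ.update a (t * ζ a) =
      ((1 + t) / 2) • ζ + ((1 - t) / 2) • ζ.update a (-ζ a) := by
    ext i
    simp only [Finsupp.coe_update, Finsupp.coe_add, Finsupp.coe_smul, Pi.add_apply,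
      Pi.smul_apply, smul_eq_mul]
    rcases eq_or_ne i a with rfl | hia
    · rw [Function.update_self, Function.update_self]; ring
    · rw [Function.update_of_ne hia, Function.update_of_ne hia]; ring
  calc Φ.toFun (ζ.update a (t * ζ a))
      ≤ |(1 + t) / 2| * Φ.toFun ζ + |(1 - t) / 2| * Φ.toFun (ζ.update a (-ζ a)) := by
        rw [hconvex, ← Φ.smul_eq, ← Φ.smul_eq]; exact Φ.add_le _ _
    _ = Φ.toFun ζ := by
        rw [toFun_neg_update, abs_of_nonneg (by linarith), abs_of_nonneg (by linarith)]; ring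

theorem toFun_update_le (ζ : ℕ →₀ ℝ) (a : ℕ) {c : ℝ} (hc : |c| ≤ |ζ a|) :
    Φ.toFun (ζ.update a c) ≤ Φ.toFun ζ := by
  obtain ⟨t, ht, rfl⟩ : ∃ t : ℝ, |t| ≤ 1 ∧ c = t * ζ a := by
    rcases eq_or_ne (ζ a) 0 with hz | hz
    · exact ⟨0, by simp, by simpa [hz] using hc⟩
    · refine ⟨c / ζ a, ?_, by field_simp⟩
      rw [abs_div]; exact div_le_one_of_le₀ hc (abs_nonneg _)
  exact Φ.toFun_update_mul_le ζ a ht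

theorem toFun_le_of_abs_le {ξ η : ℕ →₀ ℝ} (h : ∀ i, |ξ i| ≤ η i) :
    Φ.toFun ξ ≤ Φ.toFun η := by
  suffices ∀ s : Finset ℕ, ∀ ξ : ℕ →₀ ℝ, (∀ i, |ξ i| ≤ η i) → (∀ i ∉ s, ξ i = η i) →
      Φ.toFun ξ ≤ Φ.toFun η from
    this (ξ.support ∪ η.support) ξ h fun i hi => by
      simp only [Finset.mem_union, Finsupp.mem_support_iff, not_or, not_not] at hi
      rw [hi.1, hi.2]
  intro s
  induction s using Finset.induction_on with
  | empty => intro ξ _ hξ; rw [show ξ = η from Finsupp.ext fun i => hξ i (Finset.notMem_empty i)]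
  | insert a s _ ih =>
    intro ξ h hξ
    have hηa : 0 ≤ η a := (abs_nonneg _).trans (h a)
    calc Φ.toFun ξ = Φ.toFun ((ξ.update a (η a)).update a (ξ a)) := by simp
      _ ≤ Φ.toFun (ξ.update a (η a)) :=
          Φ.toFun_update_le _ a (by simpa [abs_of_nonneg hηa] using h a)
      _ ≤ Φ.toFun η := by
          refine ih _ (fun i => ?_) (fun i hi => ?_) <;> rcases eq_or_ne i a with rfl | hia
          · simp [abs_of_nonneg hηa]
          · simpa [Function.update_of_ne hia] using h i
          · simp
          · simpa [Function.update_of_ne hia] using hξ i (by simp [hia, hi])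

theorem toFun_mapDomain {f : ℕ → ℕ} (hf : Function.Injective f) (ξ : ℕ →₀ ℝ) :
    Φ.toFun (ξ.mapDomain f) = Φ.toFun ξ := by
  let e : (ξ.support : Set ℕ) ≃ (f '' ξ.support) := Equiv.Set.image f _ hf
  have : Finite {i | i ∈ (ξ.support : Set ℕ)} := ξ.support.finite_toSet
  rw [← Φ.perm_invariant e.extendSubtype ξ, Finsupp.equivMapDomain_eq_mapDomain]
  refine congrArg Φ.toFun (Finsupp.mapDomain_congr fun i hi => ?_)
  rw [e.extendSubtype_apply_of_mem i hi]
  rfl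

variable {ξ η : ℕ → ℝ}

theorem toFun_truncF_mono (hξ : ∀ i, 0 ≤ ξ i) : Monotone fun n => Φ.toFun (truncF ξ n) := by
  intro m n hmn
  refine Φ.toFun_le_of_abs_le fun i => ?_
  simp only [truncF_apply]
  split_ifs <;> first | omega | simp [abs_of_nonneg, hξ]

theorem tendsto_toFun_truncF_ext (h : MemLPhi Φ ξ) :
    Tendsto (fun n => Φ.toFun (truncF ξ n)) atTop (nhds (Φ.ext ξ)) := by
  obtain ⟨L, hL⟩ := h.2
  rwa [SymmetricNorm.ext, hL.limUnder_eq]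

theorem ext_nonneg (h : MemLPhi Φ ξ) : 0 ≤ Φ.ext ξ :=
  ge_of_tendsto' (Φ.tendsto_toFun_truncF_ext h) fun _ => Φ.nonneg _

theorem ext_le_of_toFun_truncF_le (h : MemLPhi Φ ξ) {C : ℝ}
    (hC : ∀ n, Φ.toFun (truncF ξ n) ≤ C) : Φ.ext ξ ≤ C :=
  le_of_tendsto' (Φ.tendsto_toFun_truncF_ext h) hC

theorem toFun_truncF_le_ext (h : MemLPhiPlus Φ ξ) (n : ℕ) : Φ.toFun (truncF ξ n) ≤ Φ.ext ξ :=
  (Φ.toFun_truncF_mono h.1).ge_of_tendsto (Φ.tendsto_toFun_truncF_ext h.2) n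

theorem memLPhiPlus_of_toFun_truncF_le (hξ : ∀ i, 0 ≤ ξ i) (h0 : Tendsto ξ atTop (nhds 0))
    {C : ℝ} (hC : ∀ n, Φ.toFun (truncF ξ n) ≤ C) : MemLPhiPlus Φ ξ :=
  ⟨hξ, h0, _, tendsto_atTop_ciSup (Φ.toFun_truncF_mono hξ) ⟨C, by rintro _ ⟨n, rfl⟩; exact hC n⟩⟩

theorem memLPhiPlus_add (hξ : MemLPhiPlus Φ ξ) (hη : MemLPhiPlus Φ η) :
    MemLPhiPlus Φ (ξ + η) := by
  refine Φ.memLPhiPlus_of_toFun_truncF_le (fun i => add_nonneg (hξ.1 i) (hη.1 i))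
    (add_zero (0 : ℝ) ▸ hξ.2.1.add hη.2.1) (C := Φ.ext ξ + Φ.ext η) fun n => ?_
  rw [truncF_add]
  exact (Φ.add_le _ _).trans
    (add_le_add (Φ.toFun_truncF_le_ext hξ n) (Φ.toFun_truncF_le_ext hη n))

theorem memLPhiPlus_of_le (hη : MemLPhiPlus Φ η) (hξ : ∀ i, 0 ≤ ξ i) (hle : ∀ i, ξ i ≤ η i) :
    MemLPhiPlus Φ ξ := by
  refine Φ.memLPhiPlus_of_toFun_truncF_le hξ (squeeze_zero hξ hle hη.2.1) fun n =>
    (Φ.toFun_le_of_abs_le fun i => ?_).trans (Φ.toFun_truncF_le_ext hη n)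
  simp only [truncF_apply]
  split_ifs <;> simp [abs_of_nonneg, hξ, hle]

end SymmetricNorm

section Interleave

variable {α : Type*}

def interleave (f g : ℕ → α) : ℕ → α :=
  Sum.elim f g ∘ Equiv.natSumNatEquivNat.symm

@[simp]
theorem interleave_two_mul (f g : ℕ → α) (n : ℕ) : interleave f g (2 * n) = f n := by
  have : Equiv.natSumNatEquivNat.symm (2 * n) = .inl n := (Equiv.symm_apply_eq _).2 rfl
  simp [interleave, this]

@[simp]
theorem interleave_two_mul_add_one (f g : ℕ → α) (n : ℕ) :
    interleave f g (2 * n + 1) = g n := by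
  have : Equiv.natSumNatEquivNat.symm (2 * n + 1) = .inr n := (Equiv.symm_apply_eq _).2 rfl
  simp [interleave, this]

theorem interleave_eq_or_eq (f g : ℕ → α) (n : ℕ) :
    interleave f g n = f (n / 2) ∨ interleave f g n = g (n / 2) := by
  rcases Nat.even_or_odd' n with ⟨k, rfl | rfl⟩ <;> simp [Nat.add_div]

theorem forall_interleave {p : α → Prop} {f g : ℕ → α} (hf : ∀ i, p (f i))
    (hg : ∀ i, p (g i)) (n : ℕ) : p (interleave f g n) :=
  (interleave_eq_or_eq f g n).elim (fun h => h ▸ hf _) (fun h => h ▸ hg _)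

theorem interleave_map₂ {β γ : Type*} (F : α → β → γ) (f g : ℕ → α) (f' g' : ℕ → β) (n : ℕ) :
    F (interleave f g n) (interleave f' g' n) =
      interleave (fun i => F (f i) (f' i)) (fun i => F (g i) (g' i)) n := by
  simp only [interleave, Function.comp_apply]
  cases Equiv.natSumNatEquivNat.symm n <;> rfl

theorem encard_preimage_interleave (f g : ℕ → α) (P : Set α) :
    (interleave f g ⁻¹' P).encard = (f ⁻¹' P).encard + (g ⁻¹' P).encard := by
  rw [interleave, Set.preimage_comp,
    Set.encard_preimage_of_bijective Equiv.natSumNatEquivNat.symm.bijective, Set.preimage_sumElim,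
    Set.encard_union_eq Set.disjoint_image_inl_image_inr, Sum.inl_injective.encard_image,
    Sum.inr_injective.encard_image]

theorem IsEnum.msum {x0 : α} {S S' : α → ℕ∞} {s s' : ℕ → α} (hs : IsEnum x0 S s)
    (hs' : IsEnum x0 S' s') :
    IsEnum x0 (msum x0 S S') (interleave s s') := by
  intro x hx
  simp only [_root_.msum, if_neg hx, hs x hx, hs' x hx]
  exact (encard_preimage_interleave s s' {x}).symm

theorem tendsto_interleave {l : Filter α} {f g : ℕ → α} (hf : Tendsto f atTop l)
    (hg : Tendsto g atTop l) : Tendsto (interleave f g) atTop l := by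
  have hdiv : Tendsto (· / 2) atTop atTop := Nat.tendsto_div_const_atTop two_ne_zero
  intro U hU
  rw [Filter.mem_map]
  filter_upwards [hdiv.eventually (hf hU), hdiv.eventually (hg hU)] with n hfn hgn
  rcases interleave_eq_or_eq f g n with h | h <;> rw [Set.mem_preimage, h] <;> assumption

theorem truncF_interleave (ζ ζ' : ℕ → ℝ) (n : ℕ) :
    truncF (interleave ζ ζ') (2 * n) =
      (truncF ζ n).mapDomain (2 * ·) + (truncF ζ' n).mapDomain (2 * · + 1) := by
  induction n with
  | zero => simp [truncF]
  | succ n ih =>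
    rw [show 2 * (n + 1) = 2 * n + 1 + 1 by ring, truncF_succ, truncF_succ, ih, truncF_succ,
      truncF_succ, Finsupp.mapDomain_add, Finsupp.mapDomain_add, Finsupp.mapDomain_single,
      Finsupp.mapDomain_single, interleave_two_mul, interleave_two_mul_add_one]
    abel

end Interleave

namespace SymmetricNorm

variable (Φ : SymmetricNorm) {ζ ζ' : ℕ → ℝ}

theorem toFun_truncF_interleave_le (hζ : MemLPhiPlus Φ ζ) (hζ' : MemLPhiPlus Φ ζ') (n : ℕ) :
    Φ.toFun (truncF (interleave ζ ζ') n) ≤ Φ.ext ζ + Φ.ext ζ' := by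
  have hnonneg : ∀ i, 0 ≤ interleave ζ ζ' i := forall_interleave (p := (0 ≤ ·)) hζ.1 hζ'.1
  calc Φ.toFun (truncF (interleave ζ ζ') n)
      ≤ Φ.toFun (truncF (interleave ζ ζ') (2 * n)) := Φ.toFun_truncF_mono hnonneg (by omega)
    _ ≤ Φ.toFun ((truncF ζ n).mapDomain (2 * ·)) + Φ.toFun ((truncF ζ' n).mapDomain (2 * · + 1)) :=
        truncF_interleave ζ ζ' n ▸ Φ.add_le _ _
    _ = Φ.toFun (truncF ζ n) + Φ.toFun (truncF ζ' n) := by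
        rw [Φ.toFun_mapDomain fun _ _ h => by simpa using h,
          Φ.toFun_mapDomain fun _ _ h => by simpa using h]
    _ ≤ Φ.ext ζ + Φ.ext ζ' :=
        add_le_add (Φ.toFun_truncF_le_ext hζ n) (Φ.toFun_truncF_le_ext hζ' n)

theorem memLPhiPlus_interleave (hζ : MemLPhiPlus Φ ζ) (hζ' : MemLPhiPlus Φ ζ') :
    MemLPhiPlus Φ (interleave ζ ζ') :=
  Φ.memLPhiPlus_of_toFun_truncF_le
    (forall_interleave (p := (0 ≤ ·)) hζ.1 hζ'.1)
    (tendsto_interleave hζ.2.1 hζ'.2.1) (Φ.toFun_truncF_interleave_le hζ hζ')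

theorem ext_interleave_le (hζ : MemLPhiPlus Φ ζ) (hζ' : MemLPhiPlus Φ ζ') :
    Φ.ext (interleave ζ ζ') ≤ Φ.ext ζ + Φ.ext ζ' :=
  Φ.ext_le_of_toFun_truncF_le (Φ.memLPhiPlus_interleave hζ hζ').2
    (Φ.toFun_truncF_interleave_le hζ hζ')

end SymmetricNorm

def dPhiCosts (Φ : SymmetricNorm) (x0 : X) (S T : X → ℕ∞) : Set ℝ :=
  {r | ∃ s t : ℕ → X, IsEnum x0 S s ∧ IsEnum x0 T t ∧
    MemLPhi Φ (fun i => dist (s i) (t i)) ∧ r = Φ.ext fun i => dist (s i) (t i)}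

theorem dPhi_eq_sInf_dPhiCosts (Φ : SymmetricNorm) (x0 : X) (S T : X → ℕ∞) :
    dPhi Φ x0 S T = sInf (dPhiCosts Φ x0 S T) :=
  rfl

section EnumerationDistance

variable {Φ : SymmetricNorm} {x0 : X} {S T : X → ℕ∞} {s t : ℕ → X}

theorem memLPhiPlus_dist (hs : MemLPhi Φ fun i => dist x0 (s i))
    (ht : MemLPhi Φ fun i => dist x0 (t i)) : MemLPhiPlus Φ fun i => dist (s i) (t i) :=
  Φ.memLPhiPlus_of_le (Φ.memLPhiPlus_add ⟨fun _ => dist_nonneg, hs⟩ ⟨fun _ => dist_nonneg, ht⟩)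
    (fun _ => dist_nonneg) fun _ => dist_triangle_left _ _ _

theorem dPhi_le_ext (hs : IsEnum x0 S s) (ht : IsEnum x0 T t)
    (h : MemLPhi Φ fun i => dist (s i) (t i)) :
    dPhi Φ x0 S T ≤ Φ.ext fun i => dist (s i) (t i) :=
  (dPhi_eq_sInf_dPhiCosts Φ x0 S T).symm ▸
    csInf_le ⟨0, by rintro _ ⟨s, t, -, -, h, rfl⟩; exact Φ.ext_nonneg h⟩ ⟨s, t, hs, ht, h, rfl⟩

theorem exists_isEnum_ext_lt_dPhi_add (hS : MemSPhi Φ x0 S) (hT : MemSPhi Φ x0 T) {ε : ℝ}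
    (hε : 0 < ε) : ∃ s t : ℕ → X, IsEnum x0 S s ∧ IsEnum x0 T t ∧
      MemLPhiPlus Φ (fun i => dist (s i) (t i)) ∧
      Φ.ext (fun i => dist (s i) (t i)) < dPhi Φ x0 S T + ε := by
  obtain ⟨-, s, hs, hsΦ⟩ := hS
  obtain ⟨-, t, ht, htΦ⟩ := hT
  rw [dPhi_eq_sInf_dPhiCosts]
  obtain ⟨_, ⟨s, t, hs, ht, hst, rfl⟩, hlt⟩ := Real.lt_sInf_add_pos (s := dPhiCosts Φ x0 S T)
    ⟨_, s, t, hs, ht, (memLPhiPlus_dist hsΦ htΦ).2, rfl⟩ hε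
  exact ⟨s, t, hs, ht, ⟨fun _ => dist_nonneg, hst⟩, hlt⟩

end EnumerationDistance

/-- `d_Φ(S + S', T + T') ≤ d_Φ(S, T) + d_Φ(S', T')` for multisets in `S_Φ(X, x₀)`. -/
theorem dPhi_msum_le (x0 : X) (Φ : SymmetricNorm) (S S' T T' : X → ℕ∞)
    (hS : MemSPhi Φ x0 S) (hS' : MemSPhi Φ x0 S')
    (hT : MemSPhi Φ x0 T) (hT' : MemSPhi Φ x0 T') :
    dPhi Φ x0 (msum x0 S S') (msum x0 T T') ≤ dPhi Φ x0 S T + dPhi Φ x0 S' T' := by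
  refine le_of_forall_pos_lt_add fun ε hε => ?_
  obtain ⟨s, t, hs, ht, hst, hlt⟩ := exists_isEnum_ext_lt_dPhi_add hS hT (half_pos hε)
  obtain ⟨s', t', hs', ht', hst', hlt'⟩ := exists_isEnum_ext_lt_dPhi_add hS' hT' (half_pos hε)
  have hdist : (fun i => dist (interleave s s' i) (interleave t t' i)) =
      interleave (fun i => dist (s i) (t i)) (fun i => dist (s' i) (t' i)) :=
    funext (interleave_map₂ dist s s' t t')
  calc dPhi Φ x0 (msum x0 S S') (msum x0 T T')
      ≤ Φ.ext (interleave (fun i => dist (s i) (t i)) (fun i => dist (s' i) (t' i))) :=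
        hdist ▸ dPhi_le_ext (hs.msum hs') (ht.msum ht')
          (hdist ▸ (Φ.memLPhiPlus_interleave hst hst').2)
    _ ≤ Φ.ext (fun i => dist (s i) (t i)) + Φ.ext (fun i => dist (s' i) (t' i)) :=
        Φ.ext_interleave_le hst hst'
    _ < dPhi Φ x0 S T + dPhi Φ x0 S' T' + ε := by linarith
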